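/- Let p be an odd prime, ζ a primitive p-th root of unity, π = (1-ζ)O_K, and u a primitive root mod p with σ(ζ) = ζ^u. Suppose C ∈ K satisfies v_π(C) = 0, C ≡ 1 + c₀λ^ν mod π^(ν+1) for some c₀ ∈ ℤ with c₀ ≢ 0 mod p, where λ = ζ-1 and 1 ≤ ν ≤ p-2, and σ(C) ≡ C^μ mod π^(ν+1) for some μ ∈ ℤ, μ ≢ 0 mod p. Then u^ν ≡ μ mod p. -/

import Mathlib

/-!
Write `λ = ζ - 1`. Every automorphism of `K` maps `λ` to an associate of `λ`, so `σ` preserves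
`v_π`, and `σ λ = (1 + λ) ^ u - 1 = λ (u + O(λ))` gives `σ C ≡ 1 + c₀ u^ν λ^ν mod π^(ν+1)`.
Since `2ν ≥ ν + 1`, the binomial expansion gives `C^μ ≡ 1 + μ c₀ λ^ν mod π^(ν+1)`. Comparing the
two, `π^(ν+1)` divides `c₀ (u^ν - μ) λ^ν`, so `π` divides the rational integer `c₀ (u^ν - μ)`,
hence so does `p`, and `p ∤ c₀`.
-/

open scoped NumberField
open IsDedekindDomain IsDedekindDomain.HeightOneSpectrum WithZero

theorem pow_succ_dvd_one_add_pow_sub_one_pow_sub {R : Type*} [CommRing R] (x : R) (u ν : ℕ) :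
    x ^ (ν + 1) ∣ ((1 + x) ^ u - 1) ^ ν - (u * x) ^ ν := by
  obtain ⟨d, hd⟩ : x ^ 2 ∣ (1 + x) ^ u - 1 - u * x := by
    simpa [add_comm, mul_comm, sub_right_comm] using sq_dvd_add_pow_sub_sub x (1 : R) u
  obtain ⟨e, he⟩ := sub_dvd_pow_sub_pow (u + x * d) (u : R) ν
  have hfactor : (1 + x) ^ u - 1 = x * (u + x * d) := by linear_combination hd
  exact ⟨d * e, by rw [hfactor, mul_pow, mul_pow]; linear_combination x ^ ν * he⟩

namespace Valuation

variable {K Γ₀ : Type*} [Field K] [LinearOrderedCommGroupWithZero Γ₀] (w : Valuation K Γ₀)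

theorem map_natCast_le_one (n : ℕ) : w n ≤ 1 := by
  induction n with
  | zero => simp
  | succ n ih => rw [Nat.cast_succ]; exact w.map_add_le ih w.map_one.le

theorem map_intCast_le_one (n : ℤ) : w n ≤ 1 := by
  obtain ⟨n, rfl | rfl⟩ := Int.eq_nat_or_neg n <;> simp [map_natCast_le_one]

theorem map_pow_sub_one_add_mul_le {x : K} (hx : w x ≤ 1) (m : ℕ) :
    w (x ^ m - (1 + m * (x - 1))) ≤ w (x - 1) ^ 2 := by
  induction m with
  | zero => simp
  | succ m ih =>
    rw [show x ^ (m + 1) - (1 + ↑(m + 1) * (x - 1))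
      = (x ^ m - (1 + m * (x - 1))) * x + m * (x - 1) ^ 2 by push_cast; ring]
    refine w.map_add_le ?_ ?_
    · simpa [map_mul] using mul_le_mul' ih hx
    · simpa [map_mul] using mul_le_mul' (w.map_natCast_le_one m) (le_refl (w (x - 1) ^ 2))

theorem map_zpow_sub_one_add_mul_le {x : K} (hx : w x = 1) (m : ℤ) :
    w (x ^ m - (1 + m * (x - 1))) ≤ w (x - 1) ^ 2 := by
  obtain ⟨k, rfl | rfl⟩ := Int.eq_nat_or_neg m
  · simpa using w.map_pow_sub_one_add_mul_le hx.le k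
  have hx0 : x ≠ 0 := by rintro rfl; simp at hx
  have hinv : w (x⁻¹ - 1) = w (x - 1) := by
    rw [show x⁻¹ - 1 = -(x - 1) / x by field_simp; ring, map_div₀, map_neg, hx, div_one]
  rw [show x ^ (-(k : ℤ)) - (1 + ((-(k : ℤ) : ℤ) : K) * (x - 1))
      = (x⁻¹ ^ k - (1 + k * (x⁻¹ - 1))) + k * ((x - 1) ^ 2 / x) by
    rw [zpow_neg, zpow_natCast, inv_pow]; push_cast; field_simp; ring]
  refine w.map_add_le (hinv ▸ w.map_pow_sub_one_add_mul_le (by simp [hx]) k) ?_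
  simpa [map_mul, map_div₀, hx] using
    mul_le_mul' (w.map_natCast_le_one k) (le_refl (w (x - 1) ^ 2))

theorem map_zpow_sub_le_of_map_sub_le {x a : K} {s t : Γ₀} (hx : w x = 1)
    (hxa : w (x - (1 + a)) ≤ t) (ha : w a ≤ s) (hts : t ≤ s) (hst : s ^ 2 ≤ t) (m : ℤ) :
    w (x ^ m - (1 + m * a)) ≤ t := by
  have hx1 : w (x - 1) ≤ s := by
    rw [show x - 1 = a + (x - (1 + a)) by ring]
    exact w.map_add_le ha (hxa.trans hts)
  rw [show x ^ m - (1 + m * a) = (x ^ m - (1 + m * (x - 1))) + m * (x - (1 + a)) by ring]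
  refine w.map_add_le ?_ ?_
  · exact (w.map_zpow_sub_one_add_mul_le hx m).trans ((pow_le_pow_left' hx1 2).trans hst)
  · simpa [map_mul] using mul_le_mul' (w.map_intCast_le_one m) hxa

end Valuation

namespace IsDedekindDomain.HeightOneSpectrum

variable {R : Type*} [CommRing R] [IsDedekindDomain R] (v : HeightOneSpectrum R) {π : R}

theorem intValuation_le_exp_iff_pow_dvd (hv : v.asIdeal = Ideal.span {π}) (r : R) (n : ℕ) :
    v.intValuation r ≤ exp (-(n : ℤ)) ↔ π ^ n ∣ r := by
  rw [intValuation_le_pow_iff_mem, hv, Ideal.span_singleton_pow, Ideal.mem_span_singleton]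

theorem valuation_le_exp_of_pow_dvd (K : Type*) [Field K] [Algebra R K] [IsFractionRing R K]
    (hv : v.asIdeal = Ideal.span {π}) {r : R} {n : ℕ} (h : π ^ n ∣ r) :
    v.valuation K (algebraMap R K r) ≤ exp (-(n : ℤ)) := by
  rw [valuation_of_algebraMap]; exact (v.intValuation_le_exp_iff_pow_dvd hv r n).mpr h

theorem intValuation_map_eq_of_associated (hv : v.asIdeal = Ideal.span {π}) (e : R ≃+* R)
    (he : Associated (e π) π) (r : R) : v.intValuation (e r) = v.intValuation r := by
  rcases eq_or_ne r 0 with rfl | hr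
  · simp
  rw [intValuation_eq_exp_neg_multiplicity _ (e.map_ne_zero_iff.mpr hr),
    intValuation_eq_exp_neg_multiplicity _ hr]
  congr 3
  refine multiplicity_eq_of_emultiplicity_eq (emultiplicity_eq_emultiplicity_iff.mpr fun n ↦ ?_)
  rw [← intValuation_le_pow_iff_dvd, ← intValuation_le_pow_iff_dvd,
    v.intValuation_le_exp_iff_pow_dvd hv, v.intValuation_le_exp_iff_pow_dvd hv,
    ← (he.pow_pow (n := n)).dvd_iff_dvd_left, ← map_pow, map_dvd_iff]

end IsDedekindDomain.HeightOneSpectrum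

namespace IsPrimitiveRoot

theorem dvd_of_sub_one_dvd_intCast {A : Type*} [CommRing A] [IsDomain A] {ζ : A} {p : ℕ}
    (hp : p.Prime) (hζ : IsPrimitiveRoot ζ p) (hζ1 : ¬IsUnit (ζ - 1)) {n : ℤ}
    (hn : ζ - 1 ∣ (n : A)) : (p : ℤ) ∣ n := by
  by_contra hpn
  have hcop : IsCoprime ((p : ℤ) : A) (n : A) :=
    ((Nat.prime_iff_prime_int.mp hp).irreducible.coprime_iff_not_dvd.mpr hpn).intCast
  exact hζ1 (hcop.isUnit_of_dvd' (by simpa using hζ.sub_one_dvd_natCast hp.one_lt) hn)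

theorem intCast_dvd_of_valuation_mul_pow_le {R K : Type*} [CommRing R] [IsDedekindDomain R]
    [Field K] [Algebra R K] [IsFractionRing R K] {p : ℕ} (hp : p.Prime) {ζ : R}
    (hζ : IsPrimitiveRoot ζ p) (v : HeightOneSpectrum R) (hv : v.asIdeal = Ideal.span {ζ - 1})
    {N : ℤ} {ν : ℕ}
    (h : v.valuation K (N * (algebraMap R K ζ - 1) ^ ν) ≤ exp (-((ν + 1 : ℕ) : ℤ))) :
    (p : ℤ) ∣ N := by
  have hunit : ¬IsUnit (ζ - 1) := fun hunit ↦
    v.isPrime.ne_top (by rw [hv, Ideal.span_singleton_eq_top]; exact hunit)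
  have hne : (ζ - 1) ^ ν ≠ 0 := pow_ne_zero _ (sub_ne_zero.mpr (hζ.ne_one hp.one_lt))
  refine hζ.dvd_of_sub_one_dvd_intCast hp hunit ?_
  rwa [show (N : K) * (algebraMap R K ζ - 1) ^ ν = algebraMap R K ((ζ - 1) ^ ν * N) by
      simp [mul_comm],
    valuation_of_algebraMap, v.intValuation_le_exp_iff_pow_dvd hv, pow_succ,
    mul_dvd_mul_iff_left hne] at h

theorem valuation_algEquiv_apply {K : Type*} [Field K] [NumberField K] {p : ℕ} [NeZero p]
    {ζ : 𝓞 K} (hζ : IsPrimitiveRoot ζ p) (v : HeightOneSpectrum (𝓞 K))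
    (hv : v.asIdeal = Ideal.span {ζ - 1}) (σ : K ≃ₐ[ℚ] K) (x : K) :
    v.valuation K (σ x) = v.valuation K x := by
  set τ := galRestrict ℤ ℚ K (𝓞 K) σ
  have hvτ (r : 𝓞 K) : v.intValuation (τ r) = v.intValuation r :=
    v.intValuation_map_eq_of_associated hv τ.toRingEquiv
      (hζ.associated_sub_one_map_sub_one τ).symm r
  obtain ⟨a, b, -, rfl⟩ := IsFractionRing.div_surjective (A := 𝓞 K) x
  rw [map_div₀, ← algebraMap_galRestrict_apply ℤ σ, ← algebraMap_galRestrict_apply ℤ σ,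
    map_div₀, map_div₀, valuation_of_algebraMap, valuation_of_algebraMap,
    valuation_of_algebraMap, valuation_of_algebraMap, hvτ, hvτ]

theorem valuation_algEquiv_sub_le {K : Type*} [Field K] [NumberField K] {p : ℕ} [NeZero p]
    {ζ : 𝓞 K} (hζ : IsPrimitiveRoot ζ p) (v : HeightOneSpectrum (𝓞 K))
    (hv : v.asIdeal = Ideal.span {ζ - 1}) {σ : K ≃ₐ[ℚ] K} {u : ℕ} (hσ : σ ζ = (ζ : K) ^ u)
    {C : K} {c : ℤ} {ν : ℕ}
    (hC : v.valuation K (C - (1 + c * ((ζ : K) - 1) ^ ν)) ≤ exp (-((ν + 1 : ℕ) : ℤ))) :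
    v.valuation K (σ C - (1 + c * (u : K) ^ ν * ((ζ : K) - 1) ^ ν))
      ≤ exp (-((ν + 1 : ℕ) : ℤ)) := by
  have hσζ : v.valuation K (σ ((ζ : K) - 1) ^ ν - (u : K) ^ ν * ((ζ : K) - 1) ^ ν)
      ≤ exp (-((ν + 1 : ℕ) : ℤ)) := by
    have := v.valuation_le_exp_of_pow_dvd K hv
      (pow_succ_dvd_one_add_pow_sub_one_pow_sub (ζ - 1) u ν)
    rw [add_sub_cancel] at this
    simpa [hσ, mul_pow] using this
  rw [show σ C - (1 + c * (u : K) ^ ν * ((ζ : K) - 1) ^ ν)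
      = σ (C - (1 + c * ((ζ : K) - 1) ^ ν))
        + c * (σ ((ζ : K) - 1) ^ ν - (u : K) ^ ν * ((ζ : K) - 1) ^ ν) by
    rw [map_sub, map_add, map_one, map_mul, map_intCast, map_pow]; ring]
  refine (v.valuation K).map_add_le (by rwa [hζ.valuation_algEquiv_apply v hv σ]) ?_
  rw [map_mul]
  exact (mul_le_mul' ((v.valuation K).map_intCast_le_one c) hσζ).trans_eq (one_mul _)

end IsPrimitiveRoot

theorem stmt_7_general (p : ℕ+) (hp : (p : ℕ).Prime)
    (K : Type) [Field K] [NumberField K]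
    (ζ : 𝓞 K) (hζ : IsPrimitiveRoot ζ p)
    (v : IsDedekindDomain.HeightOneSpectrum (𝓞 K))
    (hv : v.asIdeal = Ideal.span {1 - ζ})
    (u : ℕ)
    (σ : K ≃ₐ[ℚ] K) (hσ : σ (ζ : K) = (ζ : K) ^ u)
    (μ : ℤ)
    (C : K) (hC0 : v.valuation K C = 1)
    (c₀ : ℤ) (hc₀ : ¬ ((p : ℕ) : ℤ) ∣ c₀)
    (ν : ℕ) (hν1 : 1 ≤ ν)
    (hC : v.valuation K (C - (1 + (c₀ : K) * ((ζ : K) - 1) ^ ν)) ≤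
      ((Multiplicative.ofAdd (-((ν : ℤ) + 1)) : Multiplicative ℤ) : WithZero (Multiplicative ℤ)))
    (hσC : v.valuation K (σ C - C ^ μ) ≤
      ((Multiplicative.ofAdd (-((ν : ℤ) + 1)) : Multiplicative ℤ) : WithZero (Multiplicative ℤ))) :
    (u : ZMod p) ^ ν = (μ : ZMod p) := by
  change _ ≤ exp (-((ν + 1 : ℕ) : ℤ)) at hC hσC
  have hv' : v.asIdeal = Ideal.span {ζ - 1} := by rw [hv, ← Ideal.span_singleton_neg, neg_sub]
  have hσC' := hζ.valuation_algEquiv_sub_le v hv' hσ hC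
  have hCμ : v.valuation K (C ^ μ - (1 + μ * (c₀ * ((ζ : K) - 1) ^ ν)))
      ≤ exp (-((ν + 1 : ℕ) : ℤ)) := by
    refine (v.valuation K).map_zpow_sub_le_of_map_sub_le hC0 hC (s := exp (-(ν : ℤ))) ?_ ?_ ?_ μ
    · simpa using v.valuation_le_exp_of_pow_dvd K hv' (dvd_mul_left ((ζ - 1) ^ ν) (c₀ : 𝓞 K))
    · exact exp_le_exp.mpr (by push_cast; omega)
    · rw [← exp_nsmul, exp_le_exp, nsmul_eq_mul]; push_cast; omega
  have hN : v.valuation K (((c₀ * ((u : ℤ) ^ ν - μ) : ℤ) : K) * ((ζ : K) - 1) ^ ν)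
      ≤ exp (-((ν + 1 : ℕ) : ℤ)) := by
    rw [show ((c₀ * ((u : ℤ) ^ ν - μ) : ℤ) : K) * ((ζ : K) - 1) ^ ν
      = (σ C - C ^ μ) - (σ C - (1 + c₀ * (u : K) ^ ν * ((ζ : K) - 1) ^ ν))
        + (C ^ μ - (1 + μ * (c₀ * ((ζ : K) - 1) ^ ν))) by push_cast; ring]
    exact (v.valuation K).map_add_le ((v.valuation K).map_sub_le hσC hσC') hCμ
  have hpu : ((p : ℕ) : ℤ) ∣ (u : ℤ) ^ ν - μ :=
    ((Nat.prime_iff_prime_int.mp hp).dvd_mul.mp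
      (hζ.intCast_dvd_of_valuation_mul_pow_le hp v hv' hN)).resolve_left hc₀
  rw [← sub_eq_zero]
  exact_mod_cast (ZMod.intCast_zmod_eq_zero_iff_dvd _ p).mpr hpu

/-- Suppose `C ∈ K` with `v_π(C) = 0`, `C ≡ 1 + c₀λ^ν mod π^(ν+1)` with `c₀ ≢ 0 mod p`
and `1 ≤ ν ≤ p-2`, and `σ(C) ≡ C^μ mod π^(ν+1)` with `μ ≢ 0 mod p`.  Then
`u^ν ≡ μ mod p`. -/
theorem stmt_7 (p : ℕ+) (hp : (p : ℕ).Prime) (hodd : Odd (p : ℕ))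
    (K : Type) [Field K] [NumberField K] [IsCyclotomicExtension {(p : ℕ)} ℚ K]
    (ζ : 𝓞 K) (hζ : IsPrimitiveRoot ζ p)
    (v : IsDedekindDomain.HeightOneSpectrum (𝓞 K))
    (hv : v.asIdeal = Ideal.span {1 - ζ})
    (u : ℕ) (hu : orderOf (u : ZMod p) = (p : ℕ) - 1)
    (σ : K ≃ₐ[ℚ] K) (hσ : σ (ζ : K) = (ζ : K) ^ u)
    (μ : ℤ) (hμ : ¬ ((p : ℕ) : ℤ) ∣ μ)
    (C : K) (hC0 : v.valuation K C = 1)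
    (c₀ : ℤ) (hc₀ : ¬ ((p : ℕ) : ℤ) ∣ c₀)
    (ν : ℕ) (hν1 : 1 ≤ ν) (hν2 : ν ≤ (p : ℕ) - 2)
    (hC : v.valuation K (C - (1 + (c₀ : K) * ((ζ : K) - 1) ^ ν)) ≤
      ((Multiplicative.ofAdd (-((ν : ℤ) + 1)) : Multiplicative ℤ) : WithZero (Multiplicative ℤ)))
    (hσC : v.valuation K (σ C - C ^ μ) ≤
      ((Multiplicative.ofAdd (-((ν : ℤ) + 1)) : Multiplicative ℤ) : WithZero (Multiplicative ℤ))) :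
    (u : ZMod p) ^ ν = (μ : ZMod p) :=
  stmt_7_general p hp K ζ hζ v hv u σ hσ μ C hC0 c₀ hc₀ ν hν1 hC hσC
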